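/- (Ultrametric convergence criterion) Let ρ be a gauge and (a_n)_{n∈ℕ} a sequence in ℝ̃_ρ. The series Σ_{n=0}^∞ a_n converges in the sharp topology if and only if a_n → 0 in the sharp topology as n → ∞. -/

import Mathlib

/-!
For moderate nets, sharp convergence `u_n → L` amounts to: for every `q`, for all large `n`,
`|u_n ε - L ε| ≤ ρ_ε ^ q` for all small `ε`. A fixed finite number of terms, each bounded by
`ρ^(q+1)`, sums to at most `ρ^q` for small `ε`; this ultrametric behaviour makes the partial sums
of a null sequence Cauchy, and conversely `a_n = S_(n+1) - S_n`. A Cauchy sequence converges: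
pass to a subsequence `v` with `|v_(j+1) - v_j| ≤ ρ^j` for small `ε` and take the diagonal net
`L_ε := v_(Q ε)(ε)`, where `Q ε` is the first index `j` whose estimate fails at `ε` or with
`j ≥ 1/ε`, so that `Q ε → ∞` as `ε → 0`; a geometric series bounds `|L - v_p|` by `2 ρ^p`.
-/

open Filter Topology

namespace RC

def F : Filter ℝ := nhdsWithin 0 (Set.Ioi 0)

/-- A gauge: a net `ρ : (0,1] → (0,1]` with `ρ ε → 0` as `ε → 0⁺`. -/
def Gauge (ρ : ℝ → ℝ) : Prop :=
  (∀ ε ∈ Set.Ioc (0:ℝ) 1, ρ ε ∈ Set.Ioc (0:ℝ) 1) ∧ Tendsto ρ F (nhds 0)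

/-- ρ-moderate real nets: `x_ε = O(ρ_ε^{-N})` for some `N`. -/
def Mod (ρ x : ℝ → ℝ) : Prop :=
  ∃ N : ℕ, ∃ C : ℝ, ∀ᶠ ε in F, |x ε| ≤ C * (ρ ε)⁻¹ ^ N

/-- ρ-negligible real nets: `x_ε = O(ρ_ε^{N})` for all `N`. -/
def Ngl (ρ x : ℝ → ℝ) : Prop :=
  ∀ N : ℕ, ∃ C : ℝ, ∀ᶠ ε in F, |x ε| ≤ C * ρ ε ^ N

def Eqv (ρ x y : ℝ → ℝ) : Prop := Ngl ρ (x - y)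

/-- The order on generalized numbers, at the level of representatives. -/
def leG (ρ x y : ℝ → ℝ) : Prop :=
  ∀ x', Mod ρ x' → Eqv ρ x' x → ∃ y', Mod ρ y' ∧ Eqv ρ y' y ∧ ∀ᶠ ε in F, x' ε ≤ y' ε

/-- Invertibility in the quotient ring, at the level of representatives. -/
def InvG (ρ x : ℝ → ℝ) : Prop := ∃ y, Mod ρ y ∧ Eqv ρ (x * y) 1

def ltG (ρ x y : ℝ → ℝ) : Prop := leG ρ x y ∧ InvG ρ (y - x)

def posInv (ρ r : ℝ → ℝ) : Prop := ltG ρ 0 r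

def ModC (ρ : ℝ → ℝ) (x : ℝ → ℂ) : Prop :=
  ∃ N : ℕ, ∃ C : ℝ, ∀ᶠ ε in F, ‖x ε‖ ≤ C * (ρ ε)⁻¹ ^ N

def NglC (ρ : ℝ → ℝ) (x : ℝ → ℂ) : Prop :=
  ∀ N : ℕ, ∃ C : ℝ, ∀ᶠ ε in F, ‖x ε‖ ≤ C * ρ ε ^ N

def EqvC (ρ : ℝ → ℝ) (x y : ℝ → ℂ) : Prop := NglC ρ (x - y)

def InvC (ρ : ℝ → ℝ) (x : ℝ → ℂ) : Prop := ∃ y, ModC ρ y ∧ EqvC ρ (x * y) 1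

noncomputable def absC (x : ℝ → ℂ) : ℝ → ℝ := fun ε => ‖x ε‖

/-- Convergence of a sequence of generalized numbers in the sharp topology. -/
def SharpTendsto (ρ : ℝ → ℝ) (u : ℕ → ℝ → ℝ) (L : ℝ → ℝ) : Prop :=
  ∀ q : ℕ, ∃ M : ℕ, ∀ n ≥ M, ltG ρ (fun ε => |u n ε - L ε|) (fun ε => ρ ε ^ q)

section

variable {ρ : ℝ → ℝ}

theorem Gauge.eventually_pos (hρ : Gauge ρ) : ∀ᶠ ε in F, 0 < ρ ε := by
  filter_upwards [(Ioo_mem_nhdsGT one_pos : Set.Ioo (0 : ℝ) 1 ∈ F)] with ε hε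
  exact (hρ.1 ε ⟨hε.1, hε.2.le⟩).1

theorem Gauge.eventually_lt (hρ : Gauge ρ) {c : ℝ} (hc : 0 < c) : ∀ᶠ ε in F, ρ ε < c :=
  hρ.2.eventually_lt_const hc

theorem Gauge.eventually_mul_pow_succ_le (hρ : Gauge ρ) (C : ℝ) (q : ℕ) :
    ∀ᶠ ε in F, C * ρ ε ^ (q + 1) ≤ ρ ε ^ q := by
  have hCρ : ∀ᶠ ε in F, C * ρ ε < 1 := by
    simpa using (hρ.2.const_mul C).eventually_lt_const (show C * 0 < 1 by simp)
  filter_upwards [hρ.eventually_pos, hCρ] with ε hpos hlt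
  calc C * ρ ε ^ (q + 1) = C * ρ ε * ρ ε ^ q := by ring
    _ ≤ 1 * ρ ε ^ q := mul_le_mul_of_nonneg_right hlt.le (pow_pos hpos q).le
    _ = ρ ε ^ q := one_mul _

theorem Gauge.eventually_abs_sum_le (hρ : Gauge ρ) {ι : Type*} (s : Finset ι)
    {f : ι → ℝ → ℝ} {q : ℕ} (h : ∀ i ∈ s, ∀ᶠ ε in F, |f i ε| ≤ ρ ε ^ (q + 1)) :
    ∀ᶠ ε in F, |∑ i ∈ s, f i ε| ≤ ρ ε ^ q := by
  filter_upwards [(eventually_all_finset s).2 h, hρ.eventually_mul_pow_succ_le s.card q]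
    with ε hf hcard
  calc |∑ i ∈ s, f i ε| ≤ ∑ i ∈ s, |f i ε| := Finset.abs_sum_le_sum_abs _ _
    _ ≤ s.card * ρ ε ^ (q + 1) := by simpa using Finset.sum_le_card_nsmul s _ _ hf
    _ ≤ ρ ε ^ q := hcard

section Moderate

variable {x y : ℝ → ℝ}

theorem mod_of_eventually_abs_le (C : ℝ) (h : ∀ᶠ ε in F, |x ε| ≤ C) : Mod ρ x :=
  ⟨0, C, by simpa using h⟩

theorem mod_pow (hρ : Gauge ρ) (q : ℕ) : Mod ρ (fun ε => ρ ε ^ q) := by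
  refine mod_of_eventually_abs_le 1 ?_
  filter_upwards [hρ.eventually_pos, hρ.eventually_lt one_pos] with ε h0 h1
  rw [abs_of_pos (pow_pos h0 q)]
  exact pow_le_one₀ h0.le h1.le

theorem Mod.mono (hy : Mod ρ y) (h : ∀ᶠ ε in F, |x ε| ≤ |y ε|) : Mod ρ x := by
  obtain ⟨N, C, hC⟩ := hy
  exact ⟨N, C, by filter_upwards [h, hC] with ε h1 h2 using h1.trans h2⟩

theorem Mod.neg (hx : Mod ρ x) : Mod ρ (-x) :=
  hx.mono (by simp)

theorem Mod.abs (hx : Mod ρ x) : Mod ρ (fun ε => |x ε|) :=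
  hx.mono (by simp)

theorem Mod.add (hρ : Gauge ρ) (hx : Mod ρ x) (hy : Mod ρ y) : Mod ρ (x + y) := by
  obtain ⟨N₁, C₁, h₁⟩ := hx
  obtain ⟨N₂, C₂, h₂⟩ := hy
  refine ⟨N₁ + N₂, |C₁| + |C₂|, ?_⟩
  filter_upwards [h₁, h₂, hρ.eventually_pos, hρ.eventually_lt one_pos] with ε hx hy h0 h1
  have hinv : 1 ≤ (ρ ε)⁻¹ := one_le_inv₀ h0 |>.2 h1.le
  have hpow₁ : (ρ ε)⁻¹ ^ N₁ ≤ (ρ ε)⁻¹ ^ (N₁ + N₂) := pow_le_pow_right₀ hinv (by omega)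
  have hpow₂ : (ρ ε)⁻¹ ^ N₂ ≤ (ρ ε)⁻¹ ^ (N₁ + N₂) := pow_le_pow_right₀ hinv (by omega)
  have hC₁ : C₁ * (ρ ε)⁻¹ ^ N₁ ≤ |C₁| * (ρ ε)⁻¹ ^ N₁ := by gcongr; exact le_abs_self _
  have hC₂ : C₂ * (ρ ε)⁻¹ ^ N₂ ≤ |C₂| * (ρ ε)⁻¹ ^ N₂ := by gcongr; exact le_abs_self _
  calc |x ε + y ε| ≤ |x ε| + |y ε| := abs_add_le _ _
    _ ≤ |C₁| * (ρ ε)⁻¹ ^ N₁ + |C₂| * (ρ ε)⁻¹ ^ N₂ := by linarith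
    _ ≤ (|C₁| + |C₂|) * (ρ ε)⁻¹ ^ (N₁ + N₂) := by
        rw [add_mul]; gcongr

theorem Mod.sub (hρ : Gauge ρ) (hx : Mod ρ x) (hy : Mod ρ y) : Mod ρ (x - y) := by
  simpa [sub_eq_add_neg] using hx.add hρ hy.neg

theorem mod_sum (hρ : Gauge ρ) {ι : Type*} (s : Finset ι) {f : ι → ℝ → ℝ}
    (h : ∀ i ∈ s, Mod ρ (f i)) : Mod ρ (fun ε => ∑ i ∈ s, f i ε) := by
  induction s using Finset.cons_induction with
  | empty => exact mod_of_eventually_abs_le 0 (by simp)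
  | cons i s hi ih =>
      simp only [Finset.sum_cons]
      exact (h i (Finset.mem_cons_self i s)).add hρ (ih fun j hj => h j (Finset.mem_cons_of_mem hj))

end Moderate

section Order

variable {x y : ℝ → ℝ}

theorem eqv_refl (ρ x : ℝ → ℝ) : Eqv ρ x x :=
  fun _ => ⟨0, by simp⟩

theorem leG_of_eventually_le (hρ : Gauge ρ) (hx : Mod ρ x) (hy : Mod ρ y)
    (h : ∀ᶠ ε in F, x ε ≤ y ε) : leG ρ x y := by
  intro x' hx' hx'x
  refine ⟨y + (x' - x), hy.add hρ (hx'.sub hρ hx), by simpa [Eqv] using hx'x, ?_⟩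
  filter_upwards [h] with ε hε
  simp only [Pi.add_apply, Pi.sub_apply]
  linarith

theorem invG_of_eventually_le (hρ : Gauge ρ) {c : ℝ} (hc : 0 < c) {p : ℕ}
    (h : ∀ᶠ ε in F, c * ρ ε ^ p ≤ x ε) : InvG ρ x := by
  have hlower : ∀ᶠ ε in F, 0 < c * ρ ε ^ p := by
    filter_upwards [hρ.eventually_pos] with ε hε using mul_pos hc (pow_pos hε p)
  refine ⟨x⁻¹, ⟨p, c⁻¹, ?_⟩, fun _ => ⟨0, ?_⟩⟩
  · filter_upwards [h, hlower] with ε hle hpos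
    rw [Pi.inv_apply, abs_inv, abs_of_pos (hpos.trans_le hle), inv_pow, ← mul_inv]
    exact inv_anti₀ hpos hle
  · filter_upwards [h, hlower] with ε hle hpos
    simp [(hpos.trans_le hle).ne']

theorem ltG_of_eventually_add_le (hρ : Gauge ρ) (hx : Mod ρ x) (hy : Mod ρ y) {c : ℝ}
    (hc : 0 < c) {p : ℕ} (h : ∀ᶠ ε in F, x ε + c * ρ ε ^ p ≤ y ε) : ltG ρ x y := by
  refine ⟨leG_of_eventually_le hρ hx hy ?_, invG_of_eventually_le hρ hc (p := p) ?_⟩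
  · filter_upwards [h, hρ.eventually_pos] with ε hle hpos
    linarith [mul_pos hc (pow_pos hpos p)]
  · filter_upwards [h] with ε hle
    simp only [Pi.sub_apply]
    linarith

theorem leG.exists_eventually_le_add (h : leG ρ x y) (hx : Mod ρ x) (N : ℕ) :
    ∃ C, ∀ᶠ ε in F, x ε ≤ y ε + C * ρ ε ^ N := by
  obtain ⟨y', -, hy'y, hxy'⟩ := h x hx (eqv_refl ρ x)
  obtain ⟨C, hC⟩ := hy'y N
  refine ⟨C, ?_⟩
  filter_upwards [hxy', hC] with ε hle hnegl
  have := (abs_le.1 hnegl).2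
  simp only [Pi.sub_apply] at this
  linarith

end Order

def RepTendsto (ρ : ℝ → ℝ) (u : ℕ → ℝ → ℝ) (L : ℝ → ℝ) : Prop :=
  ∀ q : ℕ, ∃ M : ℕ, ∀ n ≥ M, ∀ᶠ ε in F, |u n ε - L ε| ≤ ρ ε ^ q

def RepCauchySeq (ρ : ℝ → ℝ) (u : ℕ → ℝ → ℝ) : Prop :=
  ∀ q : ℕ, ∃ M : ℕ, ∀ m ≥ M, ∀ n ≥ M, ∀ᶠ ε in F, |u m ε - u n ε| ≤ ρ ε ^ q

section Convergence

variable {u : ℕ → ℝ → ℝ} {L : ℝ → ℝ}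

theorem repTendsto_of_le_mul_pow (hρ : Gauge ρ) (C : ℝ)
    (h : ∀ q : ℕ, ∃ M : ℕ, ∀ n ≥ M, ∀ᶠ ε in F, |u n ε - L ε| ≤ C * ρ ε ^ q) :
    RepTendsto ρ u L := by
  intro q
  obtain ⟨M, hM⟩ := h (q + 1)
  exact ⟨M, fun n hn => by
    filter_upwards [hM n hn, hρ.eventually_mul_pow_succ_le C q] with ε h1 h2 using h1.trans h2⟩

theorem sharpTendsto_iff_repTendsto (hρ : Gauge ρ) (hu : ∀ n, Mod ρ (u n)) (hL : Mod ρ L) :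
    SharpTendsto ρ u L ↔ RepTendsto ρ u L := by
  have hdist : ∀ n, Mod ρ (fun ε => |u n ε - L ε|) := fun n => ((hu n).sub hρ hL).abs
  constructor
  · intro h q
    obtain ⟨M, hM⟩ := h (q + 1)
    refine ⟨M, fun n hn => ?_⟩
    obtain ⟨C, hC⟩ := (hM n hn).1.exists_eventually_le_add (hdist n) (q + 1)
    filter_upwards [hC, hρ.eventually_mul_pow_succ_le (1 + C) q] with ε h1 h2
    linarith
  · intro h q
    obtain ⟨M, hM⟩ := h (q + 1)
    refine ⟨M, fun n hn => ltG_of_eventually_add_le hρ (hdist n) (mod_pow hρ q)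
      (c := 1 / 2) (p := q) (by norm_num) ?_⟩
    filter_upwards [hM n hn, hρ.eventually_mul_pow_succ_le 2 q] with ε h1 h2
    linarith

theorem RepTendsto.succ_sub (hρ : Gauge ρ) (h : RepTendsto ρ u L) :
    RepTendsto ρ (fun n ε => u (n + 1) ε - u n ε) 0 := by
  refine repTendsto_of_le_mul_pow hρ 2 fun q => ?_
  obtain ⟨M, hM⟩ := h q
  refine ⟨M, fun n hn => ?_⟩
  filter_upwards [hM (n + 1) (by omega), hM n hn] with ε h1 h2
  calc |u (n + 1) ε - u n ε - (0 : ℝ → ℝ) ε| = |(u (n + 1) ε - L ε) - (u n ε - L ε)| := by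
        rw [Pi.zero_apply, sub_zero, sub_sub_sub_cancel_right]
    _ ≤ |u (n + 1) ε - L ε| + |u n ε - L ε| := abs_sub _ _
    _ ≤ 2 * ρ ε ^ q := by linarith

theorem RepTendsto.repCauchySeq_sum_range (hρ : Gauge ρ) {a : ℕ → ℝ → ℝ}
    (h : RepTendsto ρ a 0) : RepCauchySeq ρ (fun m ε => ∑ k ∈ Finset.range m, a k ε) := by
  intro q
  obtain ⟨M, hM⟩ := h (q + 1)
  refine ⟨M, fun m hm n hn => ?_⟩
  wlog hnm : n ≤ m generalizing m n
  · simpa only [abs_sub_comm] using this n hn m hm (le_of_not_ge hnm)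
  have hIco : ∀ ε, ∑ k ∈ Finset.range m, a k ε - ∑ k ∈ Finset.range n, a k ε =
      ∑ k ∈ Finset.Ico n m, a k ε := fun ε => (Finset.sum_Ico_eq_sub _ hnm).symm
  simp only [hIco]
  exact hρ.eventually_abs_sum_le _ fun k hk => by
    simpa using hM k (hn.trans (Finset.mem_Ico.1 hk).1)

theorem abs_sub_le_two_mul_pow_of_abs_succ_sub_le_pow {v : ℕ → ℝ} {r : ℝ} (hr₀ : 0 ≤ r)
    (hr : r ≤ 1 / 2) {p n : ℕ} (hpn : p ≤ n)
    (h : ∀ j, p ≤ j → j < n → |v (j + 1) - v j| ≤ r ^ j) : |v n - v p| ≤ 2 * r ^ p := by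
  calc |v n - v p| = dist (v p) (v n) := by rw [Real.dist_eq, abs_sub_comm]
    _ ≤ ∑ j ∈ Finset.Ico p n, r ^ j := dist_le_Ico_sum_of_dist_le hpn fun hpj hjn => by
        rw [Real.dist_eq, abs_sub_comm]; exact h _ hpj hjn
    _ ≤ r ^ p / (1 - r) := geom_sum_Ico_le_of_lt_one hr₀ (by linarith)
    _ ≤ 2 * r ^ p := by
        rw [div_le_iff₀ (by linarith)]
        nlinarith [pow_nonneg hr₀ p]

theorem exists_tendsto_atTop_forall_lt {P : ℕ → ℝ → Prop} (h : ∀ j, ∀ᶠ ε in F, P j ε) :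
    ∃ Q : ℝ → ℕ, Tendsto Q F atTop ∧ ∀ ε, ∀ j < Q ε, P j ε := by
  classical
  -- the extra condition `j < ε⁻¹` fails for large `j`, so the first failing index exists
  have hfail : ∀ ε, ∃ j, ¬(P j ε ∧ (j : ℝ) < ε⁻¹) := fun ε =>
    (exists_nat_ge ε⁻¹).imp fun j hj hP => hP.2.not_ge hj
  have hev : ∀ j, ∀ᶠ ε in F, P j ε ∧ (j : ℝ) < ε⁻¹ := fun j =>
    (h j).and (tendsto_inv_nhdsGT_zero.eventually_gt_atTop _)
  refine ⟨fun ε => Nat.find (hfail ε), tendsto_atTop.2 fun p => ?_,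
    fun ε j hj => (not_not.1 (Nat.find_min (hfail ε) hj)).1⟩
  filter_upwards [(eventually_all_finset (Finset.range p)).2 fun j _ => hev j] with ε hε
  exact (Nat.le_find_iff _ _).2 fun j hj => not_not.2 (hε j (Finset.mem_range.2 hj))

theorem exists_eventually_abs_sub_le_two_mul_pow (hρ : Gauge ρ) {v : ℕ → ℝ → ℝ}
    (hv : ∀ j, ∀ᶠ ε in F, |v (j + 1) ε - v j ε| ≤ ρ ε ^ j) :
    ∃ L : ℝ → ℝ, ∀ p, ∀ᶠ ε in F, |L ε - v p ε| ≤ 2 * ρ ε ^ p := by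
  obtain ⟨Q, hQ, hQv⟩ := exists_tendsto_atTop_forall_lt hv
  refine ⟨fun ε => v (Q ε) ε, fun p => ?_⟩
  filter_upwards [hQ.eventually_ge_atTop p, hρ.eventually_pos,
    hρ.eventually_lt (c := 1 / 2) (by norm_num)] with ε hp h0 h1
  exact abs_sub_le_two_mul_pow_of_abs_succ_sub_le_pow (v := fun j => v j ε) h0.le h1.le hp
    fun j _ hj => hQv ε j hj

theorem RepCauchySeq.exists_repTendsto (hρ : Gauge ρ) (hu : ∀ n, Mod ρ (u n))
    (h : RepCauchySeq ρ u) : ∃ L, Mod ρ L ∧ RepTendsto ρ u L := by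
  choose M hM using h
  obtain ⟨φ, hφ, hφM⟩ := extraction_forall_of_eventually (P := fun j k => M j ≤ k)
    fun j => eventually_ge_atTop (M j)
  have hv : ∀ j, ∀ᶠ ε in F, |u (φ (j + 1)) ε - u (φ j) ε| ≤ ρ ε ^ j := fun j =>
    hM j _ ((hφM j).trans (hφ.monotone j.le_succ)) _ (hφM j)
  obtain ⟨L, hL⟩ := exists_eventually_abs_sub_le_two_mul_pow hρ (v := fun j => u (φ j)) hv
  refine ⟨L, ?_, repTendsto_of_le_mul_pow hρ 3 fun q => ⟨M q, fun n hn => ?_⟩⟩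
  · have hbdd : Mod ρ (L - u (φ 0)) := mod_of_eventually_abs_le 2 (by simpa using hL 0)
    simpa using (hu (φ 0)).add hρ hbdd
  · filter_upwards [hM q n hn (φ q) (hφM q), hL q] with ε h1 h2
    calc |u n ε - L ε| ≤ |u n ε - u (φ q) ε| + |u (φ q) ε - L ε| := abs_sub_le _ _ _
      _ = |u n ε - u (φ q) ε| + |L ε - u (φ q) ε| := by rw [abs_sub_comm (u (φ q) ε)]
      _ ≤ 3 * ρ ε ^ q := by linarith

end Convergence

end

/-- Ultrametric criterion: a series in `ℝ̃_ρ` converges sharply iff its terms tend to 0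
sharply. -/
theorem series_converges_iff_terms_tendsto_zero (ρ : ℝ → ℝ) (hρ : Gauge ρ)
    (a : ℕ → ℝ → ℝ) (ha : ∀ n, Mod ρ (a n)) :
    (∃ L, Mod ρ L ∧
        SharpTendsto ρ (fun m ε => ∑ n ∈ Finset.range m, a n ε) L) ↔
      SharpTendsto ρ a 0 := by
  have hS : ∀ m, Mod ρ (fun ε => ∑ n ∈ Finset.range m, a n ε) := fun m =>
    mod_sum hρ _ fun n _ => ha n
  rw [sharpTendsto_iff_repTendsto hρ ha (mod_of_eventually_abs_le 0 (by simp))]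
  constructor
  · rintro ⟨L, hL, hSL⟩
    simpa [Finset.sum_range_succ] using
      ((sharpTendsto_iff_repTendsto hρ hS hL).1 hSL).succ_sub hρ
  · intro h
    obtain ⟨L, hL, hSL⟩ := (h.repCauchySeq_sum_range hρ).exists_repTendsto hρ hS
    exact ⟨L, hL, (sharpTendsto_iff_repTendsto hρ hS hL).2 hSL⟩

end RC
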